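/- arXiv:2205.07068 — 3 statements merged into one kernel-verified Lean document; each statement's English description precedes it below -/
import Mathlib

section
/- Let M₀ = (m̃_{ij})_{i,j=0}^{2} be a 3×3 real symmetric positive definite matrix, and define the 3×3 matrix B with rows: row 2 = (2 m̃_{22}², 0, 0); row 0 = (2 m̃_{20} m̃_{22}, m̃_{10} m̃_{22} - m̃_{20} m̃_{12}, 2 m̃_{22} m̃_{00} - m̃_{12} m̃_{10} + m̃_{20} m̃_{12}²/m̃_{22} - 2 m̃_{20}²); row 1 = (2 m̃_{21} m̃_{22}, m̃_{11} m̃_{22} - m̃_{21}², 2 m̃_{22} m̃_{01} - m̃_{12} m̃_{11} + m̃_{12}³/m̃_{22} - 2 m̃_{21} m̃_{02}). Then det B ≠ 0. -/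
theorem det_eq_neg_four_mul_pow_three_mul_det {K : Type*} [Field K] {M : Matrix (Fin 3) (Fin 3) K}
    (hM : M.IsSymm) (h22 : M 2 2 ≠ 0) :
    (!![2 * M 2 0 * M 2 2,
        M 1 0 * M 2 2 - M 2 0 * M 1 2,
        2 * M 2 2 * M 0 0 - M 1 2 * M 1 0 + M 2 0 * (M 1 2) ^ 2 / M 2 2 - 2 * (M 2 0) ^ 2;
        2 * M 2 1 * M 2 2,
        M 1 1 * M 2 2 - (M 2 1) ^ 2,
        2 * M 2 2 * M 0 1 - M 1 2 * M 1 1 + (M 1 2) ^ 3 / M 2 2 - 2 * M 2 1 * M 0 2;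
        2 * (M 2 2) ^ 2, 0, 0] : Matrix (Fin 3) (Fin 3) K).det = -4 * M 2 2 ^ 3 * M.det := by
  have h01 : M 0 1 = M 1 0 := hM.apply 1 0
  have h02 : M 0 2 = M 2 0 := hM.apply 2 0
  have h12 : M 1 2 = M 2 1 := hM.apply 2 1
  rw [Matrix.det_fin_three, Matrix.det_fin_three, h01, h02, h12]
  simp only [Matrix.of_apply, Matrix.cons_val', Matrix.cons_val_zero, Matrix.cons_val_fin_one,
    Matrix.cons_val_one, Matrix.cons_val]
  field_simp
  ring

theorem stmt_8_general (M : Matrix (Fin 3) (Fin 3) ℝ) (hpd : M.PosDef)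
    (B : Matrix (Fin 3) (Fin 3) ℝ)
    (hB : B = !![2 * M 2 0 * M 2 2,
                 M 1 0 * M 2 2 - M 2 0 * M 1 2,
                 2 * M 2 2 * M 0 0 - M 1 2 * M 1 0 + M 2 0 * (M 1 2) ^ 2 / M 2 2
                   - 2 * (M 2 0) ^ 2;
                 2 * M 2 1 * M 2 2,
                 M 1 1 * M 2 2 - (M 2 1) ^ 2,
                 2 * M 2 2 * M 0 1 - M 1 2 * M 1 1 + (M 1 2) ^ 3 / M 2 2
                   - 2 * M 2 1 * M 0 2;
                 2 * (M 2 2) ^ 2, 0, 0]) :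
    B.det ≠ 0 := by
  have h22 : 0 < M 2 2 := hpd.diag_pos
  have hM : M.IsSymm := by simpa using hpd.isHermitian
  rw [hB, det_eq_neg_four_mul_pow_three_mul_det hM h22.ne']
  exact mul_ne_zero (by positivity) hpd.det_pos.ne'

theorem stmt_8 (M : Matrix (Fin 3) (Fin 3) ℝ) (hM : M.IsSymm) (hpd : M.PosDef)
    (B : Matrix (Fin 3) (Fin 3) ℝ)
    (hB : B = !![2 * M 2 0 * M 2 2,
                 M 1 0 * M 2 2 - M 2 0 * M 1 2,
                 2 * M 2 2 * M 0 0 - M 1 2 * M 1 0 + M 2 0 * (M 1 2) ^ 2 / M 2 2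
                   - 2 * (M 2 0) ^ 2;
                 2 * M 2 1 * M 2 2,
                 M 1 1 * M 2 2 - (M 2 1) ^ 2,
                 2 * M 2 2 * M 0 1 - M 1 2 * M 1 1 + (M 1 2) ^ 3 / M 2 2
                   - 2 * M 2 1 * M 0 2;
                 2 * (M 2 2) ^ 2, 0, 0]) :
    B.det ≠ 0 :=
  stmt_8_general M hpd B hB
end

section
/- Let M₀ = (m̃_{ij})_{i,j=0}^{2} be a 3×3 real symmetric matrix with m̃_{22} ≠ 0 and Δ₂ := m̃_{22} m̃_{11} - m̃_{12}² ≠ 0, and B = (b_{ij}) a real 3×3 matrix. Then the six equations (3×3 symmetry conditions): (1) b_{10} m̃_{00} + b_{11} m̃_{10} + b_{12} m̃_{20} = b_{00} m̃_{01} + b_{01} m̃_{11} + b_{02} m̃_{21}; (2) b_{10} m̃_{10} + 2b_{11} m̃_{20} = b_{00} m̃_{11} + 2b_{01} m̃_{21}; (3) b_{20} m̃_{00} + b_{21} m̃_{10} + b_{22} m̃_{20} = b_{00} m̃_{02} + b_{01} m̃_{12} + b_{02} m̃_{22}; (4) b_{20} m̃_{10} + 2b_{21} m̃_{20} = b_{00}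 m̃_{12} + 2b_{01} m̃_{22}; (5) b_{20} m̃_{01} + b_{21} m̃_{11} + b_{22} m̃_{21} = b_{10} m̃_{02} + b_{11} m̃_{12} + b_{12} m̃_{22}; (6) b_{20} m̃_{11} + 2b_{21} m̃_{21} = b_{10} m̃_{12} + 2b_{11} m̃_{22}; hold simultaneously if and only if equations (3)-(6) hold together with b_{10} = b_{20} m̃_{21}/m̃_{22} and b_{00} = b_{10}(m̃_{22}/Δ₂)(m̃_{10} - m̃_{20} m̃_{12}/m̃_{22}) - b_{20}(m̃_{21} m̃_{10} - m̃_{20} m̃_{11})/Δ₂, provided det M₀ ≠ 0. -/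
/-!
Write `E₁, …, E₆` for the residuals (left minus right side) of the six equations, and
`s = m̃₂₂`, `Δ₂ = s m̃₁₁ - m̃₁₂²`. Two linear identities, valid for every symmetric `M₀`, carry the
proof: `s E₂ - m̃₁₂ E₄ + m̃₀₂ E₆` is, up to sign, the cleared-denominator form of the formula for
`b₀₀`, and `s Δ₂ E₁ - det M₀ (s b₁₀ - m̃₁₂ b₂₀)` is a combination of `E₂, …, E₆`. Hence, given
(3)–(6), equation (2) is the `b₀₀` formula, and then (1) is the `b₁₀` formula, because both
`s Δ₂` and `det M₀` are nonzero.
-/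

theorem eq_mul_div_mul_sub_div_iff {K : Type*} [Field K] {x y z s Δ u v w t : K}
    (hs : s ≠ 0) (hΔ : Δ ≠ 0) :
    x = y * (s / Δ) * (u - v * w / s) - z * t / Δ ↔ x * Δ = y * (s * u - v * w) - z * t := by
  have hcleared :
      (y * (s / Δ) * (u - v * w / s) - z * t / Δ) * Δ = y * (s * u - v * w) - z * t := by
    field_simp
  rw [← mul_left_inj' hΔ, hcleared]

section

variable {M B : Matrix (Fin 3) (Fin 3) ℝ}

theorem eq2_iff_of_eq4_of_eq6 (hM : M.IsSymm) (h22 : M 2 2 ≠ 0)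
    (h4 : B 2 0 * M 1 0 + 2 * B 2 1 * M 2 0 = B 0 0 * M 1 2 + 2 * B 0 1 * M 2 2)
    (h6 : B 2 0 * M 1 1 + 2 * B 2 1 * M 2 1 = B 1 0 * M 1 2 + 2 * B 1 1 * M 2 2) :
    B 1 0 * M 1 0 + 2 * B 1 1 * M 2 0 = B 0 0 * M 1 1 + 2 * B 0 1 * M 2 1 ↔
      B 0 0 * (M 2 2 * M 1 1 - M 1 2 ^ 2)
        = B 1 0 * (M 2 2 * M 1 0 - M 2 0 * M 1 2) - B 2 0 * (M 2 1 * M 1 0 - M 2 0 * M 1 1) := by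
  have h12 : M 1 2 = M 2 1 := hM.apply 2 1
  rw [h12] at h4 h6 ⊢
  constructor <;> intro h
  · linear_combination (-M 2 2) * h + M 2 1 * h4 - M 2 0 * h6
  · apply mul_left_cancel₀ h22
    linear_combination (-1) * h + M 2 1 * h4 - M 2 0 * h6

theorem m22_mul_Δ₂_mul_residual₁_eq_det_mul (hM : M.IsSymm)
    (h2 : B 1 0 * M 1 0 + 2 * B 1 1 * M 2 0 = B 0 0 * M 1 1 + 2 * B 0 1 * M 2 1)
    (h3 : B 2 0 * M 0 0 + B 2 1 * M 1 0 + B 2 2 * M 2 0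
      = B 0 0 * M 0 2 + B 0 1 * M 1 2 + B 0 2 * M 2 2)
    (h4 : B 2 0 * M 1 0 + 2 * B 2 1 * M 2 0 = B 0 0 * M 1 2 + 2 * B 0 1 * M 2 2)
    (h5 : B 2 0 * M 0 1 + B 2 1 * M 1 1 + B 2 2 * M 2 1
      = B 1 0 * M 0 2 + B 1 1 * M 1 2 + B 1 2 * M 2 2)
    (h6 : B 2 0 * M 1 1 + 2 * B 2 1 * M 2 1 = B 1 0 * M 1 2 + 2 * B 1 1 * M 2 2) :
    M 2 2 * (M 2 2 * M 1 1 - M 1 2 ^ 2) *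
        (B 1 0 * M 0 0 + B 1 1 * M 1 0 + B 1 2 * M 2 0
          - (B 0 0 * M 0 1 + B 0 1 * M 1 1 + B 0 2 * M 2 1))
      = M.det * (B 1 0 * M 2 2 - B 2 0 * M 2 1) := by
  have h01 : M 0 1 = M 1 0 := hM.apply 1 0
  have h02 : M 0 2 = M 2 0 := hM.apply 2 0
  have h12 : M 1 2 = M 2 1 := hM.apply 2 1
  rw [Matrix.det_fin_three]
  simp only [h01, h02, h12] at h2 h3 h4 h5 h6 ⊢
  set Δ₂ := M 2 2 * M 1 1 - M 2 1 ^ 2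
  set c := M 2 2 * M 1 0 - M 2 0 * M 2 1
  linear_combination (M 2 2 * c - M 2 1 * Δ₂ / 2) * h2 + M 2 1 * Δ₂ * h3
    + (M 1 1 * Δ₂ / 2 - M 2 1 * c) * h4 - M 2 0 * Δ₂ * h5 + (M 2 0 * c - M 1 0 * Δ₂ / 2) * h6

theorem eq1_iff_of_eq2_to_eq6 (hM : M.IsSymm) (h22 : M 2 2 ≠ 0)
    (hΔ₂ : M 2 2 * M 1 1 - M 1 2 ^ 2 ≠ 0) (hdet : M.det ≠ 0)
    (h2 : B 1 0 * M 1 0 + 2 * B 1 1 * M 2 0 = B 0 0 * M 1 1 + 2 * B 0 1 * M 2 1)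
    (h3 : B 2 0 * M 0 0 + B 2 1 * M 1 0 + B 2 2 * M 2 0
      = B 0 0 * M 0 2 + B 0 1 * M 1 2 + B 0 2 * M 2 2)
    (h4 : B 2 0 * M 1 0 + 2 * B 2 1 * M 2 0 = B 0 0 * M 1 2 + 2 * B 0 1 * M 2 2)
    (h5 : B 2 0 * M 0 1 + B 2 1 * M 1 1 + B 2 2 * M 2 1
      = B 1 0 * M 0 2 + B 1 1 * M 1 2 + B 1 2 * M 2 2)
    (h6 : B 2 0 * M 1 1 + 2 * B 2 1 * M 2 1 = B 1 0 * M 1 2 + 2 * B 1 1 * M 2 2) :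
    B 1 0 * M 0 0 + B 1 1 * M 1 0 + B 1 2 * M 2 0
        = B 0 0 * M 0 1 + B 0 1 * M 1 1 + B 0 2 * M 2 1 ↔
      B 1 0 * M 2 2 = B 2 0 * M 2 1 := by
  have key := m22_mul_Δ₂_mul_residual₁_eq_det_mul hM h2 h3 h4 h5 h6
  rw [← sub_eq_zero, ← sub_eq_zero (a := B 1 0 * M 2 2)]
  constructor <;> intro h
  · simpa [h, hdet] using key.symm
  · simpa [h, h22, hΔ₂] using key

end

theorem stmt_11 (M B : Matrix (Fin 3) (Fin 3) ℝ) (hM : M.IsSymm)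
    (h22 : M 2 2 ≠ 0) (Δ₂ : ℝ) (hΔ₂ : Δ₂ = M 2 2 * M 1 1 - (M 1 2) ^ 2)
    (hΔ₂ne : Δ₂ ≠ 0) (hdet : M.det ≠ 0) :
    (B 1 0 * M 0 0 + B 1 1 * M 1 0 + B 1 2 * M 2 0
        = B 0 0 * M 0 1 + B 0 1 * M 1 1 + B 0 2 * M 2 1 ∧
     B 1 0 * M 1 0 + 2 * B 1 1 * M 2 0 = B 0 0 * M 1 1 + 2 * B 0 1 * M 2 1 ∧
     B 2 0 * M 0 0 + B 2 1 * M 1 0 + B 2 2 * M 2 0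
        = B 0 0 * M 0 2 + B 0 1 * M 1 2 + B 0 2 * M 2 2 ∧
     B 2 0 * M 1 0 + 2 * B 2 1 * M 2 0 = B 0 0 * M 1 2 + 2 * B 0 1 * M 2 2 ∧
     B 2 0 * M 0 1 + B 2 1 * M 1 1 + B 2 2 * M 2 1
        = B 1 0 * M 0 2 + B 1 1 * M 1 2 + B 1 2 * M 2 2 ∧
     B 2 0 * M 1 1 + 2 * B 2 1 * M 2 1 = B 1 0 * M 1 2 + 2 * B 1 1 * M 2 2) ↔
    (B 2 0 * M 0 0 + B 2 1 * M 1 0 + B 2 2 * M 2 0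
        = B 0 0 * M 0 2 + B 0 1 * M 1 2 + B 0 2 * M 2 2 ∧
     B 2 0 * M 1 0 + 2 * B 2 1 * M 2 0 = B 0 0 * M 1 2 + 2 * B 0 1 * M 2 2 ∧
     B 2 0 * M 0 1 + B 2 1 * M 1 1 + B 2 2 * M 2 1
        = B 1 0 * M 0 2 + B 1 1 * M 1 2 + B 1 2 * M 2 2 ∧
     B 2 0 * M 1 1 + 2 * B 2 1 * M 2 1 = B 1 0 * M 1 2 + 2 * B 1 1 * M 2 2 ∧
     B 1 0 = B 2 0 * M 2 1 / M 2 2 ∧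
     B 0 0 = B 1 0 * (M 2 2 / Δ₂) * (M 1 0 - M 2 0 * M 1 2 / M 2 2)
        - B 2 0 * (M 2 1 * M 1 0 - M 2 0 * M 1 1) / Δ₂) := by
  subst hΔ₂
  rw [eq_div_iff h22, eq_mul_div_mul_sub_div_iff h22 hΔ₂ne]
  constructor
  · rintro ⟨h1, h2, h3, h4, h5, h6⟩
    exact ⟨h3, h4, h5, h6, (eq1_iff_of_eq2_to_eq6 hM h22 hΔ₂ne hdet h2 h3 h4 h5 h6).1 h1,
      (eq2_iff_of_eq4_of_eq6 hM h22 h4 h6).1 h2⟩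
  · rintro ⟨h3, h4, h5, h6, hb₁₀, hb₀₀⟩
    have h2 := (eq2_iff_of_eq4_of_eq6 hM h22 h4 h6).2 hb₀₀
    exact ⟨(eq1_iff_of_eq2_to_eq6 hM h22 hΔ₂ne hdet h2 h3 h4 h5 h6).2 hb₁₀, h2, h3, h4, h5, h6⟩
end

section
/- Let M₀ be a 3×3 real symmetric positive definite matrix and B the matrix from the explicit construction (row 2 = (2 m̃_{22}², 0, 0), rows 0 and 1 as determined by the symmetry equations with b_{20} = 2 m̃_{22}², b_{21} = b_{22} = 0). Then for the matrix A(z) with diagonal z, superdiagonal (1, 2), and C(z) = B·A(z), both B·M₀ and C(z)·M₀ are symmetric for every real z, and B is invertible. -/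
/-!
Write `A(z) = z • 1 + N` with `N` nilpotent, so that `C(z) M₀ = z • (B M₀) + B N M₀`; both
symmetry claims then reduce to `B M₀` and `B N M₀` being symmetric, which is what the
entries of `B` were solved for. Expanding along the last row gives `det B = -4 m̃₂₂³ det M₀`,
nonzero because `m̃₂₂ > 0` and `det M₀ > 0`.
-/

open Matrix

variable {K : Type*} [Field K]

def symmetrizer (M : Matrix (Fin 3) (Fin 3) K) : Matrix (Fin 3) (Fin 3) K :=
  !![2 * M 2 0 * M 2 2,
     M 1 0 * M 2 2 - M 2 0 * M 1 2,
     2 * M 2 2 * M 0 0 - M 1 2 * M 1 0 + M 2 0 * (M 1 2) ^ 2 / M 2 2 - 2 * (M 2 0) ^ 2;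
     2 * M 2 1 * M 2 2,
     M 1 1 * M 2 2 - (M 2 1) ^ 2,
     2 * M 2 2 * M 0 1 - M 1 2 * M 1 1 + (M 1 2) ^ 3 / M 2 2 - 2 * M 2 1 * M 0 2;
     2 * (M 2 2) ^ 2, 0, 0]

def jordanNilpotent : Matrix (Fin 3) (Fin 3) K := !![0, 1, 0; 0, 0, 2; 0, 0, 0]

lemma jordanBlock_eq_smul_one_add (z : K) :
    !![z, 1, 0; 0, z, 2; 0, 0, z] = z • 1 + jordanNilpotent := by
  ext i j; fin_cases i <;> fin_cases j <;> simp [jordanNilpotent]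

variable {M : Matrix (Fin 3) (Fin 3) K}

lemma symmetrizer_mul_isSymm (hM : M.IsSymm) (h22 : M 2 2 ≠ 0) :
    (symmetrizer M * M).IsSymm := by
  have h01 := hM.apply 0 1; have h02 := hM.apply 0 2; have h12 := hM.apply 1 2
  refine IsSymm.ext fun i j => ?_
  fin_cases i <;> fin_cases j <;>
    simp [symmetrizer, mul_apply, Fin.sum_univ_three, h01, h02, h12] <;> field_simp <;> ring

lemma symmetrizer_mul_jordanNilpotent_mul_isSymm (hM : M.IsSymm) (h22 : M 2 2 ≠ 0) :
    (symmetrizer M * jordanNilpotent * M).IsSymm := by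
  have h01 := hM.apply 0 1; have h02 := hM.apply 0 2; have h12 := hM.apply 1 2
  refine IsSymm.ext fun i j => ?_
  fin_cases i <;> fin_cases j <;>
    simp [symmetrizer, jordanNilpotent, mul_apply, Fin.sum_univ_three, h01, h02, h12] <;>
    field_simp <;> ring

lemma det_symmetrizer (hM : M.IsSymm) (h22 : M 2 2 ≠ 0) :
    (symmetrizer M).det = -4 * M 2 2 ^ 3 * M.det := by
  have h01 := hM.apply 0 1; have h02 := hM.apply 0 2; have h12 := hM.apply 1 2
  simp only [symmetrizer, det_fin_three, of_apply, cons_val', cons_val_zero, cons_val_one,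
    cons_val, cons_val_fin_one, h01, h02, h12]
  field_simp
  ring

theorem stmt_15 (M : Matrix (Fin 3) (Fin 3) ℝ) (hM : M.IsSymm) (hpd : M.PosDef)
    (B : Matrix (Fin 3) (Fin 3) ℝ)
    (hB : B = !![2 * M 2 0 * M 2 2,
                 M 1 0 * M 2 2 - M 2 0 * M 1 2,
                 2 * M 2 2 * M 0 0 - M 1 2 * M 1 0 + M 2 0 * (M 1 2) ^ 2 / M 2 2
                   - 2 * (M 2 0) ^ 2;
                 2 * M 2 1 * M 2 2,
                 M 1 1 * M 2 2 - (M 2 1) ^ 2,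
                 2 * M 2 2 * M 0 1 - M 1 2 * M 1 1 + (M 1 2) ^ 3 / M 2 2
                   - 2 * M 2 1 * M 0 2;
                 2 * (M 2 2) ^ 2, 0, 0])
    (A : ℝ → Matrix (Fin 3) (Fin 3) ℝ)
    (hA : ∀ z, A z = !![z, 1, 0; 0, z, 2; 0, 0, z]) :
    (B * M).IsSymm ∧ (∀ z : ℝ, ((B * A z) * M).IsSymm) ∧ IsUnit B := by
  have h22 : M 2 2 ≠ 0 := hpd.diag_pos.ne'
  replace hB : B = symmetrizer M := hB
  subst hB
  refine ⟨symmetrizer_mul_isSymm hM h22, fun z => ?_, ?_⟩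
  · rw [hA z, jordanBlock_eq_smul_one_add, mul_add, mul_smul_comm, mul_one, add_mul,
      smul_mul_assoc]
    exact ((symmetrizer_mul_isSymm hM h22).smul z).add
      (symmetrizer_mul_jordanNilpotent_mul_isSymm hM h22)
  · rw [isUnit_iff_isUnit_det, det_symmetrizer hM h22, isUnit_iff_ne_zero]
    exact mul_ne_zero (mul_ne_zero (by norm_num) (pow_ne_zero 3 h22)) hpd.det_pos.ne'
end
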